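/- arXiv:2011.11689 — 2 statements merged into one kernel-verified Lean document; each statement's English description precedes it below -/
import Mathlib

section
/- Let η and D be continuous adapted real-valued processes on [0, T) with η_0 = D_0 = r, where η solves dη_t = dW_t + B dt + (d−1)/(2η_t) dt − dL^{r−η}_t (d > 1 case) and D satisfies dD_t = dW_t + B dt + (d−1)/(2 D_t) dt − dH_t with the same driving Brownian motion W, D taking values in [0,r], and H a non-decreasing adapted process. Then η_t ≥ D_t for all t ∈ [0,T). -/
/-!
The comparison is pathwise. If `D` overtook `η`, take an interval `[s, t]` on which `η - D < 0`
throughout and `η - D` is smaller at `t` than at `s`. On it `η < D ≤ r`, so the local time of `η`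
at `r` is flat; `H` can only push `D` down; and since `x ↦ (n - 1) / (2x)` is antitone, the drift of
`η` dominates that of `D`. Hence `η - D` cannot decrease on `[s, t]`, a contradiction.
-/

open MeasureTheory Set

theorem ContinuousOn.exists_Icc_neg_of_nonneg_of_neg {f : ℝ → ℝ} {a t : ℝ}
    (hat : a ≤ t) (hf : ContinuousOn f (Icc a t)) (ha : 0 ≤ f a) (ht : f t < 0) :
    ∃ s ∈ Ico a t, f t < f s ∧ ∀ u ∈ Icc s t, f u < 0 := by
  obtain ⟨c, htc, hc⟩ : ∃ c, f t < c ∧ c < 0 := ⟨f t / 2, by linarith, by linarith⟩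
  set S := Icc a t ∩ f ⁻¹' Ici c
  have hS : IsCompact S := isCompact_Icc.of_isClosed_subset
    (hf.preimage_isClosed_of_isClosed isClosed_Icc isClosed_Ici) inter_subset_left
  -- `s` is the last time `f` is at or above the level `c`.
  obtain ⟨s, ⟨⟨has, hst⟩, hcs⟩, hmax⟩ := 
    hS.exists_isGreatest ⟨a, ⟨le_rfl, hat⟩, (hc.trans_le ha).le⟩
  have hcs : c ≤ f s := hcs
  have hbelow : ∀ u ∈ Ioc s t, f u < c := fun u hu => by
    by_contra! h
    exact (hmax ⟨⟨has.trans hu.1.le, hu.2⟩, h⟩).not_gt hu.1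
  have hst : s < t := hst.lt_of_ne (by rintro rfl; linarith)
  have hsc : f s ≤ c := by
    by_contra! h
    obtain ⟨u, hu, hfu⟩ := intermediate_value_Icc' hst.le (hf.mono (Icc_subset_Icc has le_rfl))
      ⟨(hbelow t ⟨hst, le_rfl⟩).le, h.le⟩
    rcases hu.1.eq_or_lt with rfl | hsu
    · exact h.ne' hfu
    · exact (hbelow u ⟨hsu, hu.2⟩).ne hfu
  refine ⟨s, ⟨has, hst⟩, htc.trans_le hcs, fun u hu => ?_⟩
  rcases hu.1.eq_or_lt with rfl | hsu
  · exact hsc.trans_lt hc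
  · exact (hbelow u ⟨hsu, hu.2⟩).trans hc

theorem sub_eq_of_integral_eq {X A g K : ℝ → ℝ} {s t : ℝ} (hs : 0 ≤ s) (hst : s ≤ t)
    (hg : IntervalIntegrable g volume 0 t)
    (hXs : X s = A s + (∫ u in (0:ℝ)..s, g u) - K s)
    (hXt : X t = A t + (∫ u in (0:ℝ)..t, g u) - K t) :
    X t - X s = A t - A s + (∫ u in s..t, g u) - (K t - K s) := by
  have hgs : IntervalIntegrable g volume 0 s := hg.mono_set (by
    rw [uIcc_of_le hs, uIcc_of_le (hs.trans hst)]; exact Icc_subset_Icc le_rfl hst)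
  rw [← intervalIntegral.integral_interval_sub_left hg hgs, hXs, hXt]
  ring

theorem le_of_integral_eq_of_antitoneOn_drift {η D A L H b : ℝ → ℝ} {r T : ℝ}
    (hη : ContinuousOn η (Ico 0 T)) (hD : ContinuousOn D (Ico 0 T)) (h0 : D 0 ≤ η 0)
    (hηpos : ∀ t ∈ Ico 0 T, 0 < η t) (hDle : ∀ t ∈ Ico 0 T, D t ≤ r)
    (hb : AntitoneOn b (Ioi 0))
    (hL : ∀ s t : ℝ, 0 ≤ s → s ≤ t → t < T → (∀ u ∈ Icc s t, η u ≠ r) → L t = L s)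
    (hH : MonotoneOn H (Ico 0 T))
    (hintη : ∀ t ∈ Ico 0 T, IntervalIntegrable (fun u => b (η u)) volume 0 t)
    (hintD : ∀ t ∈ Ico 0 T, IntervalIntegrable (fun u => b (D u)) volume 0 t)
    (heqη : ∀ t ∈ Ico 0 T, η t = A t + (∫ u in (0:ℝ)..t, b (η u)) - L t)
    (heqD : ∀ t ∈ Ico 0 T, D t = A t + (∫ u in (0:ℝ)..t, b (D u)) - H t) :
    ∀ t ∈ Ico 0 T, D t ≤ η t := by
  intro t ht
  by_contra! hlt
  have hIcc : Icc 0 t ⊆ Ico 0 T := fun u hu => ⟨hu.1, hu.2.trans_lt ht.2⟩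
  obtain ⟨s, ⟨hs0, hst⟩, hdec, hneg⟩ :=
    ((hη.mono hIcc).sub (hD.mono hIcc)).exists_Icc_neg_of_nonneg_of_neg ht.1
      (f := fun u => η u - D u) (sub_nonneg.2 h0) (sub_neg.2 hlt)
  have hsT : s ∈ Ico 0 T := hIcc ⟨hs0, hst.le⟩
  have hlt' : ∀ u ∈ Icc s t, η u < D u := fun u hu => sub_neg.1 (hneg u hu)
  have hmem : ∀ u ∈ Icc s t, u ∈ Ico 0 T := fun u hu => hIcc ⟨hs0.trans hu.1, hu.2⟩
  have hLst : L t = L s := hL s t hs0 hst.le ht.2 fun u hu =>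
    ((hlt' u hu).trans_le (hDle u (hmem u hu))).ne
  have hHst : H s ≤ H t := hH hsT ht hst.le
  have hsub : uIcc s t ⊆ uIcc 0 t := by
    rw [uIcc_of_le hst.le, uIcc_of_le ht.1]; exact Icc_subset_Icc hs0 le_rfl
  have hdrift : (∫ u in s..t, b (D u)) ≤ ∫ u in s..t, b (η u) :=
    intervalIntegral.integral_mono_on hst.le ((hintD t ht).mono_set hsub)
      ((hintη t ht).mono_set hsub) fun u hu =>
        hb (hηpos u (hmem u hu)) ((hηpos u (hmem u hu)).trans (hlt' u hu)) (hlt' u hu).le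
  have hincη := sub_eq_of_integral_eq hs0 hst.le (hintη t ht) (heqη s hsT) (heqη t ht)
  have hincD := sub_eq_of_integral_eq hs0 hst.le (hintD t ht) (heqD s hsT) (heqD t ht)
  linarith

theorem stmt5_general {Ω : Type*} [MeasurableSpace Ω] (P : Measure Ω)
    (n : ℕ) (hn : 1 < n) (B r T : ℝ)
    (η D W Lr H : ℝ → Ω → ℝ)
    (hcont : ∀ᵐ ω ∂P, ContinuousOn (fun t => η t ω) (Set.Ico 0 T) ∧
      ContinuousOn (fun t => D t ω) (Set.Ico 0 T))
    (hinit : ∀ᵐ ω ∂P, η 0 ω = r ∧ D 0 ω = r)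
    (hηrange : ∀ᵐ ω ∂P, ∀ t ∈ Set.Ico (0:ℝ) T, 0 < η t ω ∧ η t ω ≤ r)
    (hDrange : ∀ᵐ ω ∂P, ∀ t ∈ Set.Ico (0:ℝ) T, D t ω ∈ Set.Icc 0 r)
    (hLr : ∀ᵐ ω ∂P, MonotoneOn (fun t => Lr t ω) (Set.Ico 0 T) ∧ Lr 0 ω = 0 ∧
      ∀ s t : ℝ, 0 ≤ s → s ≤ t → t < T → (∀ u ∈ Set.Icc s t, η u ω ≠ r) → Lr t ω = Lr s ω)
    (hH : ∀ᵐ ω ∂P, MonotoneOn (fun t => H t ω) (Set.Ico 0 T) ∧ H 0 ω = 0)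
    (hintη : ∀ ω, ∀ t ∈ Set.Ico (0:ℝ) T,
      IntervalIntegrable (fun s => ((n : ℝ) - 1) / (2 * η s ω)) volume 0 t)
    (hintD : ∀ ω, ∀ t ∈ Set.Ico (0:ℝ) T,
      IntervalIntegrable (fun s => ((n : ℝ) - 1) / (2 * D s ω)) volume 0 t)
    (heqη : ∀ᵐ ω ∂P, ∀ t ∈ Set.Ico (0:ℝ) T,
      η t ω = r + W t ω + B * t + (∫ s in (0:ℝ)..t, ((n : ℝ) - 1) / (2 * η s ω)) - Lr t ω)
    (heqD : ∀ᵐ ω ∂P, ∀ t ∈ Set.Ico (0:ℝ) T,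
      D t ω = r + W t ω + B * t + (∫ s in (0:ℝ)..t, ((n : ℝ) - 1) / (2 * D s ω)) - H t ω) :
    ∀ᵐ ω ∂P, ∀ t ∈ Set.Ico (0:ℝ) T, D t ω ≤ η t ω := by
  have hdrift : AntitoneOn (fun x : ℝ => ((n : ℝ) - 1) / (2 * x)) (Ioi 0) :=
    fun x hx y _ hxy => div_le_div_of_nonneg_left
      (sub_nonneg.2 (by exact_mod_cast hn.le)) (by simp_all) (by linarith)
  filter_upwards [hcont, hinit, hηrange, hDrange, hLr, hH, heqη, heqD] with ω
    ⟨hcη, hcD⟩ ⟨hη0, hD0⟩ hηr hDr ⟨_, _, hLflat⟩ ⟨hHmono, _⟩ heη heD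
  exact le_of_integral_eq_of_antitoneOn_drift (A := fun t => r + W t ω + B * t) hcη hcD
    (hη0.symm ▸ hD0.le) (fun t ht => (hηr t ht).1) (fun t ht => (hDr t ht).2) hdrift hLflat
    hHmono (hintη ω) (hintD ω) heη heD

/-- Comparison of a reflected Bessel-type process `η` (with local time at `r`)
and a dominated process `D` (with a general non-decreasing correction `H`) driven by the same
Brownian motion: almost surely `η_t ≥ D_t` on `[0,T)`. -/
theorem stmt5 {Ω : Type*} [MeasurableSpace Ω] (P : Measure Ω) [IsProbabilityMeasure P]
    (n : ℕ) (hn : 1 < n) (B r T : ℝ) (hB : 0 ≤ B) (hr : 0 < r) (hT : 0 < T)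
    (η D W Lr H : ℝ → Ω → ℝ)
    (hcont : ∀ᵐ ω ∂P, ContinuousOn (fun t => η t ω) (Set.Ico 0 T) ∧
      ContinuousOn (fun t => D t ω) (Set.Ico 0 T))
    (hinit : ∀ᵐ ω ∂P, η 0 ω = r ∧ D 0 ω = r)
    (hηrange : ∀ᵐ ω ∂P, ∀ t ∈ Set.Ico (0:ℝ) T, 0 < η t ω ∧ η t ω ≤ r)
    (hDrange : ∀ᵐ ω ∂P, ∀ t ∈ Set.Ico (0:ℝ) T, D t ω ∈ Set.Icc 0 r)
    (hLr : ∀ᵐ ω ∂P, MonotoneOn (fun t => Lr t ω) (Set.Ico 0 T) ∧ Lr 0 ω = 0 ∧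
      ∀ s t : ℝ, 0 ≤ s → s ≤ t → t < T → (∀ u ∈ Set.Icc s t, η u ω ≠ r) → Lr t ω = Lr s ω)
    (hH : ∀ᵐ ω ∂P, MonotoneOn (fun t => H t ω) (Set.Ico 0 T) ∧ H 0 ω = 0)
    (hintη : ∀ ω, ∀ t ∈ Set.Ico (0:ℝ) T,
      IntervalIntegrable (fun s => ((n : ℝ) - 1) / (2 * η s ω)) volume 0 t)
    (hintD : ∀ ω, ∀ t ∈ Set.Ico (0:ℝ) T,
      IntervalIntegrable (fun s => ((n : ℝ) - 1) / (2 * D s ω)) volume 0 t)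
    (heqη : ∀ᵐ ω ∂P, ∀ t ∈ Set.Ico (0:ℝ) T,
      η t ω = r + W t ω + B * t + (∫ s in (0:ℝ)..t, ((n : ℝ) - 1) / (2 * η s ω)) - Lr t ω)
    (heqD : ∀ᵐ ω ∂P, ∀ t ∈ Set.Ico (0:ℝ) T,
      D t ω = r + W t ω + B * t + (∫ s in (0:ℝ)..t, ((n : ℝ) - 1) / (2 * D s ω)) - H t ω) :
    ∀ᵐ ω ∂P, ∀ t ∈ Set.Ico (0:ℝ) T, D t ω ≤ η t ω :=
  stmt5_general P n hn B r T η D W Lr H hcont hinit hηrange hDrange hLr hH hintη hintD heqη heqD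
end

section
/- Let the one-dimensional reflected SDE dZ_t = dW_t + B dt + dL^Z_t with Z_0 ≥ 0, where L^Z is local time at 0 and B ∈ ℝ, and let dD_t = dW_t + b_t dt + dL^D_t − dH_t be another process driven by the same Brownian motion W, with |b_t| ≤ B, D taking values in [0,∞), L^D local time of D at 0, and H non-decreasing adapted; suppose Z_0 ≥ D_0. Then Z_t ≥ D_t for all t ≥ 0 almost surely. -/
/-!
Pathwise, `X = Z - D` satisfies `X₀ ≥ 0` and cannot decrease while it is negative: there
`D > Z ≥ 0`, so the local time of `D` is flat, and every remaining term of `X_u - X_s`, namely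
`B (u - s) - ∫ₛᵘ b`, the increment of `L^Z` and the increment of `H`, is non-negative.
Following `X` back from a negative value to the last time it was non-negative gives a
contradiction by continuity.
-/

open MeasureTheory Set Filter Topology

theorem ContinuousOn.nonneg_of_le_of_neg_on_Icc {X : ℝ → ℝ} {a : ℝ}
    (hX : ContinuousOn X (Ici a)) (ha : 0 ≤ X a)
    (hmono : ∀ s u, a ≤ s → s ≤ u → (∀ v ∈ Icc s u, X v < 0) → X s ≤ X u) :
    ∀ t, a ≤ t → 0 ≤ X t := by
  intro t hat
  by_contra! hXt
  set S := Icc a t ∩ {s | 0 ≤ X s}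
  have hSclosed : IsClosed S :=
    (hX.mono Icc_subset_Ici_self).preimage_isClosed_of_isClosed isClosed_Icc isClosed_Ici
  have hSbdd : BddAbove S := ⟨t, fun s hs => hs.1.2⟩
  obtain ⟨⟨haτ, hτt_le⟩, hXτ⟩ : sSup S ∈ S :=
    hSclosed.csSup_mem ⟨a, ⟨le_rfl, hat⟩, ha⟩ hSbdd
  set τ := sSup S
  have hτt : τ < t := hτt_le.lt_of_ne fun h => (h ▸ hXt).not_ge hXτ
  have hneg : ∀ v ∈ Ioc τ t, X v < 0 := fun v hv => by
    by_contra! hXv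
    exact hv.1.not_ge (le_csSup hSbdd ⟨⟨haτ.trans hv.1.le, hv.2⟩, hXv⟩)
  have hle : ∀ᶠ s in 𝓝[>] τ, X s ≤ X t := by
    filter_upwards [Ioc_mem_nhdsGT hτt] with s hs
    exact hmono s t (haτ.trans hs.1.le) hs.2
      fun v hv => hneg v ⟨hs.1.trans_le hv.1, hv.2⟩
  have hlim : Tendsto X (𝓝[>] τ) (𝓝 (X τ)) :=
    ((hX τ haτ).mono fun s hs => haτ.trans hs.le).tendsto
  exact (le_of_tendsto hlim hle).not_gt (hXt.trans_le hXτ)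

theorem intervalIntegral.integral_le_mul_sub_of_le {f : ℝ → ℝ} {a b C : ℝ} (hab : a ≤ b)
    (hf : IntervalIntegrable f volume a b) (hC : ∀ x ∈ Icc a b, f x ≤ C) :
    ∫ x in a..b, f x ≤ C * (b - a) := by
  calc ∫ x in a..b, f x ≤ ∫ _ in a..b, C :=
        integral_mono_on hab hf intervalIntegrable_const hC
    _ = C * (b - a) := by rw [integral_const, smul_eq_mul, mul_comm]

theorem le_of_reflected_comparison {B : ℝ} {z d w b lz ld h : ℝ → ℝ}
    (hz : ContinuousOn z (Ici 0)) (hd : ContinuousOn d (Ici 0))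
    (hz_nonneg : ∀ t, 0 ≤ t → 0 ≤ z t)
    (hb : ∀ t, 0 ≤ t → b t ≤ B) (hbint : ∀ t, IntervalIntegrable b volume 0 t)
    (hlz : MonotoneOn lz (Ici 0))
    (hld : ∀ s t, 0 ≤ s → s ≤ t → (∀ u ∈ Icc s t, d u ≠ 0) → ld t = ld s)
    (hh : MonotoneOn h (Ici 0))
    (heqz : ∀ t, 0 ≤ t → z t = z 0 + w t + B * t + lz t)
    (heqd : ∀ t, 0 ≤ t → d t = d 0 + w t + (∫ s in (0:ℝ)..t, b s) + ld t - h t)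
    (h0 : d 0 ≤ z 0) :
    ∀ t, 0 ≤ t → d t ≤ z t := by
  suffices ∀ t, 0 ≤ t → 0 ≤ (z - d) t from fun t ht => sub_nonneg.mp (this t ht)
  refine (hz.sub hd).nonneg_of_le_of_neg_on_Icc (sub_nonneg.mpr h0) ?_
  intro s u hs hsu hneg
  have hu : 0 ≤ u := hs.trans hsu
  have hld_flat : ld u = ld s := hld s u hs hsu fun v hv => by
    have := hneg v hv
    simp only [Pi.sub_apply, sub_neg] at this
    exact ((hz_nonneg v (hs.trans hv.1)).trans_lt this).ne'
  have hdrift : (∫ x in (0:ℝ)..u, b x) - ∫ x in (0:ℝ)..s, b x ≤ B * (u - s) := by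
    rw [intervalIntegral.integral_interval_sub_left (hbint u) (hbint s)]
    exact intervalIntegral.integral_le_mul_sub_of_le hsu
      ((hbint s).symm.trans (hbint u)) fun x hx => hb x (hs.trans hx.1)
  have hlz_le : lz s ≤ lz u := hlz hs hu hsu
  have hh_le : h s ≤ h u := hh hs hu hsu
  simp only [Pi.sub_apply, heqz s hs, heqz u hu, heqd s hs, heqd u hu, hld_flat]
  linarith

theorem stmt9_general {Ω : Type*} [MeasurableSpace Ω] (P : Measure Ω)
    (B : ℝ) (Z D W bdrift LZ LD H : ℝ → Ω → ℝ)
    (hcont : ∀ᵐ ω ∂P, (Continuous fun t => Z t ω) ∧ (Continuous fun t => D t ω))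
    (hZpos : ∀ᵐ ω ∂P, ∀ t : ℝ, 0 ≤ t → 0 ≤ Z t ω)
    (hb : ∀ t ω, |bdrift t ω| ≤ B)
    (hbint : ∀ ω t, IntervalIntegrable (fun s => bdrift s ω) volume 0 t)
    (hLZ : ∀ᵐ ω ∂P, MonotoneOn (fun t => LZ t ω) (Set.Ici 0) ∧ LZ 0 ω = 0 ∧
      ∀ s t : ℝ, 0 ≤ s → s ≤ t → (∀ u ∈ Set.Icc s t, Z u ω ≠ 0) → LZ t ω = LZ s ω)
    (hLD : ∀ᵐ ω ∂P, MonotoneOn (fun t => LD t ω) (Set.Ici 0) ∧ LD 0 ω = 0 ∧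
      ∀ s t : ℝ, 0 ≤ s → s ≤ t → (∀ u ∈ Set.Icc s t, D u ω ≠ 0) → LD t ω = LD s ω)
    (hH : ∀ᵐ ω ∂P, MonotoneOn (fun t => H t ω) (Set.Ici 0) ∧ H 0 ω = 0)
    (heqZ : ∀ᵐ ω ∂P, ∀ t : ℝ, 0 ≤ t →
      Z t ω = Z 0 ω + W t ω + B * t + LZ t ω)
    (heqD : ∀ᵐ ω ∂P, ∀ t : ℝ, 0 ≤ t →
      D t ω = D 0 ω + W t ω + (∫ s in (0:ℝ)..t, bdrift s ω) + LD t ω - H t ω)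
    (hinit : ∀ᵐ ω ∂P, D 0 ω ≤ Z 0 ω) :
    ∀ᵐ ω ∂P, ∀ t : ℝ, 0 ≤ t → D t ω ≤ Z t ω := by
  filter_upwards [hcont, hZpos, hLZ, hLD, hH, heqZ, heqD, hinit] with ω
    ⟨hZc, hDc⟩ hZω ⟨hLZω, _⟩ ⟨_, _, hLDω⟩ ⟨hHω, _⟩ heZ heD h0
  exact le_of_reflected_comparison hZc.continuousOn hDc.continuousOn hZω
    (fun t _ => le_of_abs_le (hb t ω)) (hbint ω) hLZω hLDω hHω heZ heD h0

/-- One-dimensional comparison: a process `Z` reflected at `0` with constant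
drift `B` dominates, pathwise almost surely, any process `D ≥ 0` driven by the same Brownian
motion with drift bounded by `B`, local time at `0`, and an extra non-decreasing subtraction
`H`, provided `Z₀ ≥ D₀`. -/
theorem stmt9 {Ω : Type*} [MeasurableSpace Ω] (P : Measure Ω) [IsProbabilityMeasure P]
    (B : ℝ) (Z D W bdrift LZ LD H : ℝ → Ω → ℝ)
    (hWcont : ∀ᵐ ω ∂P, Continuous fun t => W t ω)
    (hW0 : ∀ ω, W 0 ω = 0)
    (hcont : ∀ᵐ ω ∂P, (Continuous fun t => Z t ω) ∧ (Continuous fun t => D t ω))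
    (hZpos : ∀ᵐ ω ∂P, ∀ t : ℝ, 0 ≤ t → 0 ≤ Z t ω)
    (hDpos : ∀ᵐ ω ∂P, ∀ t : ℝ, 0 ≤ t → 0 ≤ D t ω)
    (hb : ∀ t ω, |bdrift t ω| ≤ B)
    (hbint : ∀ ω t, IntervalIntegrable (fun s => bdrift s ω) volume 0 t)
    (hLZ : ∀ᵐ ω ∂P, MonotoneOn (fun t => LZ t ω) (Set.Ici 0) ∧ LZ 0 ω = 0 ∧
      ∀ s t : ℝ, 0 ≤ s → s ≤ t → (∀ u ∈ Set.Icc s t, Z u ω ≠ 0) → LZ t ω = LZ s ω)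
    (hLD : ∀ᵐ ω ∂P, MonotoneOn (fun t => LD t ω) (Set.Ici 0) ∧ LD 0 ω = 0 ∧
      ∀ s t : ℝ, 0 ≤ s → s ≤ t → (∀ u ∈ Set.Icc s t, D u ω ≠ 0) → LD t ω = LD s ω)
    (hH : ∀ᵐ ω ∂P, MonotoneOn (fun t => H t ω) (Set.Ici 0) ∧ H 0 ω = 0)
    (heqZ : ∀ᵐ ω ∂P, ∀ t : ℝ, 0 ≤ t →
      Z t ω = Z 0 ω + W t ω + B * t + LZ t ω)
    (heqD : ∀ᵐ ω ∂P, ∀ t : ℝ, 0 ≤ t →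
      D t ω = D 0 ω + W t ω + (∫ s in (0:ℝ)..t, bdrift s ω) + LD t ω - H t ω)
    (hinit : ∀ᵐ ω ∂P, D 0 ω ≤ Z 0 ω) :
    ∀ᵐ ω ∂P, ∀ t : ℝ, 0 ≤ t → D t ω ≤ Z t ω :=
  stmt9_general P B Z D W bdrift LZ LD H hcont hZpos hb hbint hLZ hLD hH heqZ heqD hinit
end
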